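/- For all languages L and L′ over Σ: [L · L′] = [L] ·^I [L′], i.e., the trace closure of the concatenation of two languages equals the reordering concatenation of their trace closures. -/

import Mathlib

open RegularExpression
open scoped Classical

universe u

variable {α : Type u}

/-- Two words are independent if every letter of the first is independent
of every letter of the second. -/
def WIndep (I : α → α → Prop) (u v : List α) : Prop :=
  ∀ a ∈ u, ∀ b ∈ v, I a b

/-- Trace equivalence: the least equivalence relation on words containing
all pairs (x ++ [a,b] ++ y, x ++ [b,a] ++ y) with a I b. -/
inductive TrEq (I : α → α → Prop) : List α → List α → Prop
  | swap (x y : List α) {a b : α} : I a b → TrEq I (x ++ [a, b] ++ y) (x ++ [b, a] ++ y)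
  | refl (u : List α) : TrEq I u u
  | symm {u v : List α} : TrEq I u v → TrEq I v u
  | trans {u v w : List α} : TrEq I u v → TrEq I v w → TrEq I u w

/-- Trace closure of a language. -/
def TrClosure (I : α → α → Prop) (L : Set (List α)) : Set (List α) :=
  {w | ∃ z ∈ L, TrEq I w z}

/-- u ⊲ z ⊳ v with exactly n blocks of u: there are nonempty words u₁,…,uₙ and
words v₀,…,vₙ (with v₁,…,v_{n-1} nonempty) such that u = u₁⋯uₙ, v = v₀⋯vₙ,
z = v₀u₁v₁⋯uₙvₙ and vⱼ I uᵢ whenever j < i. -/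
def ScatN (I : α → α → Prop) (n : ℕ) (u z v : List α) : Prop :=
  ∃ us vs : ℕ → List α,
    (∀ i, 1 ≤ i → i ≤ n → us i ≠ []) ∧
    (∀ j, 1 ≤ j → j ≤ n - 1 → vs j ≠ []) ∧
    u = ((List.range n).map (fun i => us (i + 1))).flatten ∧
    v = ((List.range (n + 1)).map vs).flatten ∧
    z = vs 0 ++ ((List.range n).map (fun i => us (i + 1) ++ vs (i + 1))).flatten ∧
    (∀ i j, 1 ≤ i → i ≤ n → j < i → WIndep I (vs j) (us i))

/-- u ⊲ z ⊳ v -/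
def Scat (I : α → α → Prop) (u z v : List α) : Prop :=
  ∃ n, ScatN I n u z v

/-- u ∼⊲ z ⊳ v -/
def EqScat (I : α → α → Prop) (u z v : List α) : Prop :=
  ∃ u', TrEq I u u' ∧ Scat I u' z v

/-- u ∼⊲ z ⊳∼ v -/
def EqScatEq (I : α → α → Prop) (u z v : List α) : Prop :=
  ∃ u' v', TrEq I u u' ∧ Scat I u' z v' ∧ TrEq I v' v

/-- u ∼⊲_N z ⊳∼ v : as EqScatEq, with the number of blocks bounded by N -/
def EqScatEqLe (I : α → α → Prop) (N : ℕ) (u z v : List α) : Prop :=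
  ∃ u' v', TrEq I u u' ∧ (∃ n ≤ N, ScatN I n u' z v') ∧ TrEq I v' v

/-- Reordering concatenation of words. -/
def rconc (I : α → α → Prop) : List α → List α → Set (List α)
  | [], v => {v}
  | a :: u, [] => {a :: u}
  | a :: u, b :: v =>
      (List.cons a) '' rconc I u (b :: v) ∪
      {z | WIndep I (a :: u) [b] ∧ ∃ w ∈ rconc I (a :: u) v, z = b :: w}
termination_by u v => u.length + v.length

/-- Reordering concatenation lifted to languages. -/
def rconcL (I : α → α → Prop) (L L' : Set (List α)) : Set (List α) :=
  {z | ∃ u ∈ L, ∃ v ∈ L', z ∈ rconc I u v}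

/-- The reorderable part of a language w.r.t. a word. -/
def RPart (I : α → α → Prop) (u : List α) (L : Set (List α)) : Set (List α) :=
  {v ∈ L | WIndep I v u}

/-- The reordering derivative of a language along a word. -/
def RDeriv (I : α → α → Prop) (u : List α) (L : Set (List α)) : Set (List α) :=
  {v | ∃ z ∈ L, EqScat I u z v}

/-- Syntactic reorderable part of a regexp w.r.t. a letter. -/
noncomputable def Rexp (I : α → α → Prop) (a : α) : RegularExpression α → RegularExpression α
  | zero => zero
  | epsilon => epsilon
  | char b => if I a b then char b else zero
  | plus E F => plus (Rexp I a E) (Rexp I a F)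
  | comp E F => comp (Rexp I a E) (Rexp I a F)
  | RegularExpression.star E => star (Rexp I a E)

/-- Brzozowski reordering derivative of a regexp along a letter. -/
noncomputable def Dexp (I : α → α → Prop) (a : α) : RegularExpression α → RegularExpression α
  | zero => zero
  | epsilon => zero
  | char b => if a = b then epsilon else zero
  | plus E F => plus (Dexp I a E) (Dexp I a F)
  | comp E F => plus (comp (Dexp I a E) F) (comp (Rexp I a E) (Dexp I a F))
  | RegularExpression.star E => comp (star (Rexp I a E)) (comp (Dexp I a E) (star E))

/-- Syntactic reorderable part along a word. -/
noncomputable def RexpW (I : α → α → Prop) (u : List α) (E : RegularExpression α) :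
    RegularExpression α :=
  u.foldl (fun E a => Rexp I a E) E

/-- Brzozowski reordering derivative along a word. -/
noncomputable def DexpW (I : α → α → Prop) (u : List α) (E : RegularExpression α) :
    RegularExpression α :=
  u.foldl (fun E a => Dexp I a E) E

/-- Antimirov reordering parts-of-derivatives along a letter. -/
inductive Antim (I : α → α → Prop) : RegularExpression α → α → RegularExpression α → Prop
  | chr (a : α) : Antim I (char a) a epsilon
  | plusL {E F : RegularExpression α} {a E'} : Antim I E a E' → Antim I (plus E F) a E'
  | plusR {E F : RegularExpression α} {a F'} : Antim I F a F' → Antim I (plus E F) a F'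
  | compL {E F : RegularExpression α} {a E'} : Antim I E a E' → Antim I (comp E F) a (comp E' F)
  | compR {E F : RegularExpression α} {a F'} :
      Antim I F a F' → Antim I (comp E F) a (comp (Rexp I a E) F')
  | st {E : RegularExpression α} {a E'} :
      Antim I E a E' → Antim I (star E) a (comp (star (Rexp I a E)) (comp E' (star E)))

/-- Antimirov reordering parts-of-derivatives along a word. -/
inductive AntimW (I : α → α → Prop) : RegularExpression α → List α → RegularExpression α → Prop
  | nil (E : RegularExpression α) : AntimW I E [] E
  | snoc {E : RegularExpression α} {u E' a E''} :
      AntimW I E u E' → Antim I E' a E'' → AntimW I E (u ++ [a]) E''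

/-- The dependence graph of a word: vertices are positions; distinct positions
are adjacent when their letters are not independent. -/
def depGraph (I : α → α → Prop) (w : List α) : SimpleGraph (Fin w.length) where
  Adj i j := i ≠ j ∧ ¬(I (w.get i) (w.get j) ∧ I (w.get j) (w.get i))
  symm := by
    constructor
    intro i j h
    exact ⟨h.1.symm, fun hc => h.2 ⟨hc.2, hc.1⟩⟩
  loopless := by
    constructor
    intro i h
    exact h.1 rfl

/-- A word is connected if its dependence graph is connected. -/
def WordConnected (I : α → α → Prop) (w : List α) : Prop :=
  (depGraph I w).Preconnected

/-- Least fixed point star for the trace-closing semantics. -/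
def starI (I : α → α → Prop) (L : Set (List α)) : Set (List α) :=
  sInf {X | {([] : List α)} ∪ rconcL I L X ⊆ X}

/-- Trace-closing semantics of regular expressions. -/
def langI (I : α → α → Prop) : RegularExpression α → Set (List α)
  | zero => ∅
  | epsilon => {[]}
  | char a => {[a]}
  | plus E F => langI I E ∪ langI I F
  | comp E F => rconcL I (langI I E) (langI I F)
  | RegularExpression.star E => starI I (langI I E)

/-- L has (scattering) rank at most N. -/
def HasRankLe (I : α → α → Prop) (L : Set (List α)) (N : ℕ) : Prop :=
  ∀ u v, u ++ v ∈ TrClosure I L → ∃ z ∈ L, EqScatEqLe I N u z v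

/-- L has uniform (scattering) rank at most N. -/
def HasUniformRankLe (I : α → α → Prop) (L : Set (List α)) (N : ℕ) : Prop :=
  ∀ w ∈ TrClosure I L, ∃ z ∈ L, ∀ u v, w = u ++ v → EqScatEqLe I N u z v

/-- Star-connected regular expressions. -/
inductive StarConnected (I : α → α → Prop) : RegularExpression α → Prop
  | zero : StarConnected I zero
  | epsilon : StarConnected I epsilon
  | chr (a : α) : StarConnected I (char a)
  | plus {E F : RegularExpression α} :
      StarConnected I E → StarConnected I F → StarConnected I (plus E F)
  | comp {E F : RegularExpression α} :
      StarConnected I E → StarConnected I F → StarConnected I (comp E F)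
  | st {E : RegularExpression α} :
      StarConnected I E → (∀ w ∈ E.matches', WordConnected I w) → StarConnected I (star E)

/-- Refined Antimirov reordering parts-of-derivatives along a letter. -/
inductive RAntim (I : α → α → Prop) :
    RegularExpression α → α → RegularExpression α → RegularExpression α → Prop
  | chr (a : α) : RAntim I (char a) a epsilon epsilon
  | plusL {E F : RegularExpression α} {a El Er} :
      RAntim I E a El Er → RAntim I (plus E F) a El Er
  | plusR {E F : RegularExpression α} {a Fl Fr} :
      RAntim I F a Fl Fr → RAntim I (plus E F) a Fl Fr
  | compL {E F : RegularExpression α} {a El Er} :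
      RAntim I E a El Er → RAntim I (comp E F) a El (comp Er F)
  | compR {E F : RegularExpression α} {a Fl Fr} :
      RAntim I F a Fl Fr → RAntim I (comp E F) a (comp (Rexp I a E) Fl) Fr
  | st {E : RegularExpression α} {a El Er} :
      RAntim I E a El Er →
      RAntim I (star E) a (comp (star (Rexp I a E)) El) (comp Er (star E))

/-- Refined Antimirov relation lifted to nonempty lists of regexps (unbounded). -/
inductive RAntimL (I : α → α → Prop) :
    List (RegularExpression α) → α → List (RegularExpression α) → Prop
  | split {Γ Δ : List (RegularExpression α)} {E : RegularExpression α} {a El Er} :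
      RAntim I E a El Er →
      RAntimL I (Γ ++ E :: Δ) a (Γ.map (Rexp I a) ++ El :: Er :: Δ)
  | dropL {Γ Δ : List (RegularExpression α)} {E : RegularExpression α} {a El Er} :
      RAntim I E a El Er → [] ∈ El.matches' → Γ ≠ [] →
      RAntimL I (Γ ++ E :: Δ) a (Γ.map (Rexp I a) ++ Er :: Δ)
  | dropR {Γ Δ : List (RegularExpression α)} {E : RegularExpression α} {a El Er} :
      RAntim I E a El Er → [] ∈ Er.matches' → Δ ≠ [] →
      RAntimL I (Γ ++ E :: Δ) a (Γ.map (Rexp I a) ++ El :: Δ)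
  | dropBoth {Γ Δ : List (RegularExpression α)} {E : RegularExpression α} {a El Er} :
      RAntim I E a El Er → [] ∈ El.matches' → [] ∈ Er.matches' → Γ ≠ [] → Δ ≠ [] →
      RAntimL I (Γ ++ E :: Δ) a (Γ.map (Rexp I a) ++ Δ)

/-- Refined Antimirov relation along a word (unbounded). -/
inductive RAntimW (I : α → α → Prop) :
    RegularExpression α → List α → List (RegularExpression α) → Prop
  | nil (E : RegularExpression α) : RAntimW I E [] [E]
  | snoc {E : RegularExpression α} {u Γ a Γ'} :
      RAntimW I E u Γ → RAntimL I Γ a Γ' → RAntimW I E (u ++ [a]) Γ'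

/-- N-bounded refined Antimirov relation lifted to nonempty lists of regexps. -/
inductive RAntimLN (I : α → α → Prop) (N : ℕ) :
    List (RegularExpression α) → α → List (RegularExpression α) → Prop
  | split {Γ Δ : List (RegularExpression α)} {E : RegularExpression α} {a El Er} :
      RAntim I E a El Er → Γ.length + Δ.length < N →
      RAntimLN I N (Γ ++ E :: Δ) a (Γ.map (Rexp I a) ++ El :: Er :: Δ)
  | dropL {Γ Δ : List (RegularExpression α)} {E : RegularExpression α} {a El Er} :
      RAntim I E a El Er → [] ∈ El.matches' → Γ ≠ [] →
      RAntimLN I N (Γ ++ E :: Δ) a (Γ.map (Rexp I a) ++ Er :: Δ)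
  | dropR {Γ Δ : List (RegularExpression α)} {E : RegularExpression α} {a El Er} :
      RAntim I E a El Er → [] ∈ Er.matches' → Δ ≠ [] →
      RAntimLN I N (Γ ++ E :: Δ) a (Γ.map (Rexp I a) ++ El :: Δ)
  | dropBoth {Γ Δ : List (RegularExpression α)} {E : RegularExpression α} {a El Er} :
      RAntim I E a El Er → [] ∈ El.matches' → [] ∈ Er.matches' → Γ ≠ [] → Δ ≠ [] →
      RAntimLN I N (Γ ++ E :: Δ) a (Γ.map (Rexp I a) ++ Δ)

/-- N-bounded refined Antimirov relation along a word. -/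
inductive RAntimWN (I : α → α → Prop) (N : ℕ) :
    RegularExpression α → List α → List (RegularExpression α) → Prop
  | nil (E : RegularExpression α) : RAntimWN I N E [] [E]
  | snoc {E : RegularExpression α} {u Γ a Γ'} :
      RAntimWN I N E u Γ → RAntimLN I N Γ a Γ' → RAntimWN I N E (u ++ [a]) Γ'

/-!
A word `z` lies in `u ·^I v` exactly when it interleaves `u` and `v` so that every letter of `v`
overtakes only letters of `u` independent of it; such a `z` is trace equivalent to `u ++ v`.
Conversely, swapping two adjacent independent letters of such an interleaving can be absorbed by
swapping them inside `u` or inside `v` (or needs no change of `u` and `v` when one letter comes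
from each), so "`z` interleaves some `u' ∼ u` and `v' ∼ v`" is invariant under `∼` applied to `z`.
Starting from `u ++ v` this gives `[L · L'] ⊆ [L] ·^I [L']`.
-/

section ReorderingConcatenation

variable {I : α → α → Prop}

theorem TrEq.append_left {u v : List α} (w : List α) (h : TrEq I u v) :
    TrEq I (w ++ u) (w ++ v) := by
  induction h with
  | swap x y hab => simpa using TrEq.swap (I := I) (w ++ x) y hab
  | refl u => exact TrEq.refl _
  | symm _ ih => exact ih.symm
  | trans _ _ ih₁ ih₂ => exact ih₁.trans ih₂

theorem TrEq.append_right {u v : List α} (w : List α) (h : TrEq I u v) :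
    TrEq I (u ++ w) (v ++ w) := by
  induction h with
  | swap x y hab => simpa using TrEq.swap (I := I) x (y ++ w) hab
  | refl u => exact TrEq.refl _
  | symm _ ih => exact ih.symm
  | trans _ _ ih₁ ih₂ => exact ih₁.trans ih₂

theorem TrEq.append {u u' v v' : List α} (hu : TrEq I u u') (hv : TrEq I v v') :
    TrEq I (u ++ v) (u' ++ v') :=
  (hu.append_right v).trans (hv.append_left u')

theorem TrEq.cons {u v : List α} (a : α) (h : TrEq I u v) : TrEq I (a :: u) (a :: v) :=
  h.append_left [a]

theorem TrEq.swap_head {a b : α} (hab : I a b) (y : List α) :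
    TrEq I (a :: b :: y) (b :: a :: y) := by
  simpa using TrEq.swap (I := I) [] y hab

theorem TrEq.perm {u v : List α} (h : TrEq I u v) : u.Perm v := by
  induction h with
  | swap x y => exact ((List.Perm.swap _ _ []).append_left x).append_right y
  | refl u => exact List.Perm.refl u
  | symm _ ih => exact ih.symm
  | trans _ _ ih₁ ih₂ => exact ih₁.trans ih₂

theorem WIndep.mono_left {u u' v : List α} (h : WIndep I u v) (hs : u' ⊆ u) : WIndep I u' v :=
  fun a ha => h a (hs ha)

theorem windep_cons_left_iff {a : α} {u v : List α} :
    WIndep I (a :: u) v ↔ (∀ b ∈ v, I a b) ∧ WIndep I u v := by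
  simp [WIndep]

theorem TrEq.cons_append_of_windep [Std.Symm I] {b : α} {u : List α} (y : List α)
    (hu : WIndep I u [b]) : TrEq I (b :: (u ++ y)) (u ++ b :: y) := by
  induction u with
  | nil => exact TrEq.refl _
  | cons a u ih =>
    obtain ⟨hab, hu⟩ := windep_cons_left_iff.mp hu
    exact (TrEq.swap_head (_root_.symm (hab b (by simp))) _).trans ((ih hu).cons a)

/-- `RShuffle I u v z`: `z` interleaves `u` and `v`, every letter of `v` being independent of
the part of `u` it overtakes. -/
inductive RShuffle (I : α → α → Prop) : List α → List α → List α → Prop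
  | nil (v : List α) : RShuffle I [] v v
  | left {u v z : List α} (a : α) : RShuffle I u v z → RShuffle I (a :: u) v (a :: z)
  | right {u v z : List α} {b : α} :
      WIndep I u [b] → RShuffle I u v z → RShuffle I u (b :: v) (b :: z)

namespace RShuffle

theorem nil_right : ∀ u : List α, RShuffle I u [] u
  | [] => nil []
  | a :: u => (nil_right u).left a

theorem append : ∀ u v : List α, RShuffle I u v (u ++ v)
  | [], v => nil v
  | a :: u, v => (append u v).left a

theorem eq_of_nil_left {v z : List α} (h : RShuffle I [] v z) : z = v := by
  generalize hu : ([] : List α) = u at h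
  induction h with
  | nil v => rfl
  | left => simp at hu
  | right _ _ ih => rw [ih hu]

theorem eq_of_nil_right {u z : List α} (h : RShuffle I u [] z) : z = u := by
  generalize hv : ([] : List α) = v at h
  induction h with
  | nil v => exact hv.symm
  | left a _ ih => rw [ih hv]
  | right => simp at hv

theorem cons_inv {u v z : List α} {c : α} (h : RShuffle I u v (c :: z)) :
    (∃ u₀, u = c :: u₀ ∧ RShuffle I u₀ v z) ∨
      (∃ v₀, v = c :: v₀ ∧ WIndep I u [c] ∧ RShuffle I u v₀ z) ∨ (u = [] ∧ v = c :: z) := by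
  cases h with
  | nil => exact Or.inr (Or.inr ⟨rfl, rfl⟩)
  | left a h => exact Or.inl ⟨_, rfl, h⟩
  | right hw h => exact Or.inr (Or.inl ⟨_, rfl, hw, h⟩)

theorem treq_append [Std.Symm I] {u v z : List α} (h : RShuffle I u v z) :
    TrEq I z (u ++ v) := by
  induction h with
  | nil v => exact TrEq.refl _
  | left a _ ih => exact ih.cons a
  | right hw _ ih => exact (ih.cons _).trans (TrEq.cons_append_of_windep _ hw)

end RShuffle

theorem mem_rconc_iff {u v z : List α} : z ∈ rconc I u v ↔ RShuffle I u v z := by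
  constructor
  · induction u generalizing v z with
    | nil =>
      simp only [rconc, Set.mem_singleton_iff]
      rintro rfl
      exact RShuffle.nil _
    | cons a u ihu =>
      induction v generalizing z with
      | nil =>
        simp only [rconc, Set.mem_singleton_iff]
        rintro rfl
        exact RShuffle.nil_right _
      | cons b v ihv =>
        simp only [rconc, Set.mem_union, Set.mem_image, Set.mem_ofPred_eq]
        rintro (⟨w, hw, rfl⟩ | ⟨hind, w, hw, rfl⟩)
        · exact (ihu hw).left a
        · exact (ihv hw).right hind
  · intro h
    induction h with
    | nil v => simp [rconc]
    | @left u v z a h ih =>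
      cases v with
      | nil => simp [rconc, h.eq_of_nil_right]
      | cons b v =>
        simp only [rconc, Set.mem_union, Set.mem_image]
        exact Or.inl ⟨z, ih, rfl⟩
    | @right u v z b hw h ih =>
      cases u with
      | nil => simp [rconc, h.eq_of_nil_left]
      | cons a u =>
        simp only [rconc, Set.mem_union, Set.mem_ofPred_eq]
        exact Or.inr ⟨hw, z, ih, rfl⟩

def TrShuffle (I : α → α → Prop) (u v z : List α) : Prop :=
  ∃ u' v', TrEq I u u' ∧ TrEq I v v' ∧ RShuffle I u' v' z

theorem RShuffle.trShuffle_swap_head {a b : α} (hab : I a b) {u v y : List α}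
    (h : RShuffle I u v (a :: b :: y)) : TrShuffle I u v (b :: a :: y) := by
  rcases h.cons_inv with ⟨u₀, rfl, h₀⟩ | ⟨v₀, rfl, hwa, h₀⟩ | ⟨rfl, rfl⟩
  · rcases h₀.cons_inv with ⟨u₁, rfl, h₁⟩ | ⟨v₁, rfl, hwb, h₁⟩ | ⟨rfl, rfl⟩
    · exact ⟨b :: a :: u₁, v, TrEq.swap_head hab _, TrEq.refl _, (h₁.left a).left b⟩
    · have hw : WIndep I (a :: u₀) [b] := windep_cons_left_iff.mpr ⟨by simpa using hab, hwb⟩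
      exact ⟨a :: u₀, b :: v₁, TrEq.refl _, TrEq.refl _, (h₁.left a).right hw⟩
    · have hw : WIndep I [a] [b] := by simpa [WIndep] using hab
      exact ⟨[a], b :: y, TrEq.refl _, TrEq.refl _, ((RShuffle.nil y).left a).right hw⟩
  · rcases h₀.cons_inv with ⟨u₁, rfl, h₁⟩ | ⟨v₁, rfl, hwb, h₁⟩ | ⟨rfl, rfl⟩
    · have hw : WIndep I u₁ [a] := (windep_cons_left_iff.mp hwa).2
      exact ⟨b :: u₁, a :: v₀, TrEq.refl _, TrEq.refl _, (h₁.right hw).left b⟩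
    · exact ⟨u, b :: a :: v₁, TrEq.refl _, TrEq.swap_head hab _, (h₁.right hwa).right hwb⟩
    · exact ⟨[], b :: a :: y, TrEq.refl _, TrEq.swap_head hab _, RShuffle.nil _⟩
  · exact ⟨[], b :: a :: y, TrEq.refl _, TrEq.swap_head hab _, RShuffle.nil _⟩

theorem RShuffle.trShuffle_swap {a b : α} (hab : I a b) (x : List α) {u v y : List α}
    (h : RShuffle I u v (x ++ [a, b] ++ y)) : TrShuffle I u v (x ++ [b, a] ++ y) := by
  induction x generalizing u v with
  | nil => simpa using trShuffle_swap_head hab (by simpa using h)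
  | cons c x ih =>
    simp only [List.cons_append] at h ⊢
    rcases h.cons_inv with ⟨u₀, rfl, h₀⟩ | ⟨v₀, rfl, hw, h₀⟩ | ⟨rfl, rfl⟩
    · obtain ⟨u', v', hu, hv, h'⟩ := ih h₀
      exact ⟨c :: u', v', hu.cons c, hv, h'.left c⟩
    · obtain ⟨u', v', hu, hv, h'⟩ := ih h₀
      exact ⟨u', c :: v', hu, hv.cons c, h'.right (hw.mono_left hu.perm.symm.subset)⟩
    · refine ⟨[], c :: (x ++ [b, a] ++ y), TrEq.refl _, ?_, RShuffle.nil _⟩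
      simpa using TrEq.swap (I := I) (c :: x) y hab

theorem TrShuffle.of_trShuffle_swap {a b : α} (hab : I a b) (x : List α) {u v y : List α}
    (h : TrShuffle I u v (x ++ [a, b] ++ y)) : TrShuffle I u v (x ++ [b, a] ++ y) := by
  obtain ⟨u₁, v₁, hu₁, hv₁, h₁⟩ := h
  obtain ⟨u₂, v₂, hu₂, hv₂, h₂⟩ := h₁.trShuffle_swap hab x
  exact ⟨u₂, v₂, hu₁.trans hu₂, hv₁.trans hv₂, h₂⟩

theorem trShuffle_iff_of_treq [Std.Symm I] {u v z z' : List α} (h : TrEq I z z') :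
    TrShuffle I u v z ↔ TrShuffle I u v z' := by
  induction h with
  | swap x y hab =>
    exact ⟨TrShuffle.of_trShuffle_swap hab x, TrShuffle.of_trShuffle_swap (symm hab) x⟩
  | refl => exact Iff.rfl
  | symm _ ih => exact ih.symm
  | trans _ _ ih₁ ih₂ => exact ih₁.trans ih₂

end ReorderingConcatenation

theorem stmt2_general {α : Type u} (I : α → α → Prop)
    (hsym : Symmetric I) (L L' : Set (List α)) :
    TrClosure I {w | ∃ u ∈ L, ∃ v ∈ L', w = u ++ v} =
      rconcL I (TrClosure I L) (TrClosure I L') := by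
  have : Std.Symm I := ⟨fun _ _ h => hsym h⟩
  ext w
  constructor
  · rintro ⟨_, ⟨u, hu, v, hv, rfl⟩, hw⟩
    obtain ⟨u', v', hu', hv', hw'⟩ := (trShuffle_iff_of_treq hw).mpr
      ⟨u, v, TrEq.refl u, TrEq.refl v, RShuffle.append u v⟩
    exact ⟨u', ⟨u, hu, hu'.symm⟩, v', ⟨v, hv, hv'.symm⟩, mem_rconc_iff.mpr hw'⟩
  · rintro ⟨u', ⟨u, hu, hu'⟩, v', ⟨v, hv, hv'⟩, hw⟩
    exact ⟨u ++ v, ⟨u, hu, v, hv, rfl⟩,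
      ((mem_rconc_iff.mp hw).treq_append).trans (hu'.append hv')⟩

/-- [L · L′] = [L] ·^I [L′]. -/
theorem stmt2 {α : Type u} [Fintype α] (I : α → α → Prop)
    (hirr : Irreflexive I) (hsym : Symmetric I) (L L' : Set (List α)) :
    TrClosure I {w | ∃ u ∈ L, ∃ v ∈ L', w = u ++ v} =
      rconcL I (TrClosure I L) (TrClosure I L') :=
  stmt2_general I hsym L L'
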